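/- arXiv:2105.01301 — 7 statements merged into one kernel-verified Lean document; each statement's English description precedes it below -/
import Mathlib

section
/- Let G be a finite group with exactly k elements of maximal element order m. Then |G| ≤ m·k²/φ(m). -/
open Finset

/-- Key counting lemma: if `x` has maximal order `m` and `y` commutes with `x`, then at least
`φ(m)` of the elements `y * x ^ j`, `j < m`, have order `m`. -/
private lemma key_count {G : Type*} [Group G] {m : ℕ} (hm0 : 0 < m) {x y : G}
    (hx : orderOf x = m) (hxy : Commute x y)
    (hdvd : ∀ z : G, Commute x z → orderOf z ∣ m) :
    m.totient ≤ ((Finset.range m).filter fun j => orderOf (y * x ^ j) = m).card := by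
  classical
  have hxm : x ^ m = 1 := by rw [← hx]; exact pow_orderOf_eq_one x
  have hcomm : ∀ j : ℕ, Commute x (y * x ^ j) := fun j =>
    hxy.mul_right ((Commute.refl x).pow_right j)
  -- shifting `j` by a multiple of `p` does not change `(y * x ^ j) ^ (m / p)`
  have shift : ∀ p, p ∣ m → ∀ j c : ℕ,
      (y * x ^ (j + p * c)) ^ (m / p) = (y * x ^ j) ^ (m / p) := by
    intro p hp j c
    have h1 : y * x ^ (j + p * c) = (y * x ^ j) * x ^ (p * c) := by
      rw [pow_add, mul_assoc]
    have h2 : Commute (y * x ^ j) (x ^ (p * c)) := (hcomm j).symm.pow_right _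
    have h3 : p * c * (m / p) = m * c := by
      rw [mul_comm p c, mul_assoc, Nat.mul_div_cancel' hp, mul_comm]
    rw [h1, h2.mul_pow, ← pow_mul, h3, pow_mul, hxm, one_pow, mul_one]
  -- two "bad" values of `j` are congruent mod `p`
  have same : ∀ p, p ∈ m.primeFactors → ∀ j j' : ℕ, j ≤ j' →
      (y * x ^ j) ^ (m / p) = 1 → (y * x ^ j') ^ (m / p) = 1 → j % p = j' % p := by
    intro p hp j j' hle hj hj'
    obtain ⟨hpp, hpm, -⟩ := Nat.mem_primeFactors.mp hp
    obtain ⟨d, rfl⟩ := Nat.exists_eq_add_of_le hle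
    have h1 : y * x ^ (j + d) = (y * x ^ j) * x ^ d := by rw [pow_add, mul_assoc]
    have h2 : Commute (y * x ^ j) (x ^ d) := (hcomm j).symm.pow_right _
    rw [h1, h2.mul_pow, hj, one_mul, ← pow_mul] at hj'
    have h4 : m ∣ d * (m / p) := by
      have h4a := orderOf_dvd_of_pow_eq_one hj'
      rwa [hx] at h4a
    have hmp : 0 < m / p := Nat.div_pos (Nat.le_of_dvd hm0 hpm) hpp.pos
    have h4' : p * (m / p) ∣ d * (m / p) := by rw [Nat.mul_div_cancel' hpm]; exact h4
    have h5 : p ∣ d := (Nat.mul_dvd_mul_iff_right hmp).mp h4'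
    obtain ⟨e, rfl⟩ := h5
    simp [Nat.add_mul_mod_self_left]
  -- characterization of the "good" values of `j`
  have goodiff : ∀ j : ℕ, orderOf (y * x ^ j) = m ↔
      ∀ p ∈ m.primeFactors, (y * x ^ j) ^ (m / p) ≠ 1 := by
    intro j
    constructor
    · intro h p hp h1
      obtain ⟨hpp, hpm, -⟩ := Nat.mem_primeFactors.mp hp
      have hdd := orderOf_dvd_of_pow_eq_one h1
      rw [h] at hdd
      have hlt : m / p < m := Nat.div_lt_self hm0 hpp.one_lt
      have hpos : 0 < m / p := Nat.div_pos (Nat.le_of_dvd hm0 hpm) hpp.pos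
      exact absurd (Nat.le_of_dvd hpos hdd) (not_le.mpr hlt)
    · intro h
      refine orderOf_eq_of_pow_and_pow_div_prime hm0 ?_ ?_
      · exact orderOf_dvd_iff_pow_eq_one.mp (hdvd _ (hcomm j))
      · intro p hpp hpm
        exact h p (Nat.mem_primeFactors.mpr ⟨hpp, hpm, hm0.ne'⟩)
  -- badness only depends on `j % p`
  have badmod : ∀ p, p ∣ m → ∀ j : ℕ,
      (y * x ^ j) ^ (m / p) = 1 ↔ (y * x ^ (j % p)) ^ (m / p) = 1 := by
    intro p hp j
    conv_lhs => rw [← Nat.mod_add_div j p]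
    rw [shift p hp]
  -- choose a common "bad residue" witness via CRT
  set r : ℕ → ℕ := fun p => if h : ∃ j, (y * x ^ j) ^ (m / p) = 1 then h.choose else 0 with hr
  have hs : ∀ p ∈ m.primeFactors, id p ≠ 0 := fun p hp =>
    (Nat.pos_of_mem_primeFactors hp).ne'
  have pp : Set.Pairwise ↑m.primeFactors (Function.onFun Nat.Coprime id) := by
    intro p hp q hq hne
    exact (Nat.coprime_primes (Nat.prime_of_mem_primeFactors hp)
      (Nat.prime_of_mem_primeFactors hq)).mpr hne
  obtain ⟨t, ht⟩ := Nat.chineseRemainderOfFinset r id m.primeFactors hs pp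
  -- for `u` coprime to `m`, the element `y * x ^ ((t + u) % m)` has order `m`
  have hgood : ∀ u : ℕ, m.Coprime u → orderOf (y * x ^ ((t + u) % m)) = m := by
    intro u hu
    rw [goodiff]
    intro p hp hbad
    obtain ⟨hpp, hpm, -⟩ := Nat.mem_primeFactors.mp hp
    have hbad' : (y * x ^ (t + u)) ^ (m / p) = 1 := by
      rw [badmod p hpm] at hbad ⊢
      rwa [Nat.mod_mod_of_dvd _ hpm] at hbad
    have hex : ∃ j, (y * x ^ j) ^ (m / p) = 1 := ⟨t + u, hbad'⟩
    have hrbad : (y * x ^ (r p)) ^ (m / p) = 1 := by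
      simp only [hr, dif_pos hex]
      exact hex.choose_spec
    have h1 : (t + u) % p = r p % p := by
      rcases le_total (t + u) (r p) with h | h
      · exact same p hp _ _ h hbad' hrbad
      · exact (same p hp _ _ h hrbad hbad').symm
    have h2 : t % p = r p % p := ht p hp
    have h3 : (t + u) % p = (t + 0) % p := by rw [Nat.add_zero, h1, ← h2]
    have h4 : p ∣ u := by
      have h4' : u ≡ 0 [MOD p] := Nat.ModEq.add_left_cancel' t h3
      exact Nat.modEq_zero_iff_dvd.mp h4'
    have h5 : p ∣ Nat.gcd m u := Nat.dvd_gcd hpm h4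
    rw [Nat.coprime_iff_gcd_eq_one.mp hu] at h5
    exact hpp.ne_one (Nat.dvd_one.mp h5)
  -- inject the units mod `m` into the good set
  rw [Nat.totient_eq_card_coprime]
  apply Finset.card_le_card_of_injOn (fun u => (t + u) % m)
  · intro u hu
    rw [mem_coe, mem_filter, mem_range] at hu
    rw [mem_coe, mem_filter, mem_range]
    exact ⟨Nat.mod_lt _ hm0, hgood u hu.2⟩
  · intro u hu v hv h
    simp only [coe_filter, Set.mem_setOf_eq, mem_range] at hu hv
    have h' : u % m = v % m := Nat.ModEq.add_left_cancel' t h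
    rwa [Nat.mod_eq_of_lt hu.1, Nat.mod_eq_of_lt hv.1] at h'

theorem cocke_venkataraman (G : Type*) [Group G] [Fintype G]
    (m k : ℕ)
    (hm : ∀ g : G, orderOf g ≤ m) (hmex : ∃ g : G, orderOf g = m)
    (hk : k = Nat.card {g : G // orderOf g = m}) :
    Fintype.card G * Nat.totient m ≤ m * k ^ 2 := by
  classical
  obtain ⟨x, hx⟩ := hmex
  have hm0 : 0 < m := hx ▸ orderOf_pos x
  -- anything commuting with x has order dividing m
  have hdvd : ∀ z : G, Commute x z → orderOf z ∣ m := by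
    intro z hz
    obtain ⟨w, -, hw⟩ := hz.exists_orderOf_eq_lcm
    have hlcm0 : 0 < Nat.lcm (orderOf x) (orderOf z) :=
      Nat.pos_of_ne_zero (Nat.lcm_ne_zero (orderOf_pos x).ne' (orderOf_pos z).ne')
    have h1 : Nat.lcm (orderOf x) (orderOf z) ≤ m := hw ▸ hm w
    have h2 : m ≤ Nat.lcm (orderOf x) (orderOf z) :=
      hx ▸ Nat.le_of_dvd hlcm0 (Nat.dvd_lcm_left _ _)
    exact (Nat.dvd_lcm_right (orderOf x) (orderOf z)).trans (dvd_of_eq (le_antisymm h1 h2))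
  set S : Finset G := Finset.univ.filter fun g => orderOf g = m with hS
  set C : Finset G := Finset.univ.filter fun g => Commute x g with hC
  have hkS : k = S.card := by
    rw [hk, Nat.card_eq_fintype_card, Fintype.card_subtype]
  -- counting bound on the centralizer: |C| * φ(m) ≤ m * |S|
  have hmain : C.card * m.totient ≤ m * S.card := by
    have hlow : C.card * m.totient ≤
        (C.sigma fun c => (Finset.range m).filter fun j => orderOf (c * x ^ j) = m).card := by
      rw [Finset.card_sigma]
      calc C.card * m.totient = ∑ _c ∈ C, m.totient := by rw [Finset.sum_const, smul_eq_mul]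
        _ ≤ _ := Finset.sum_le_sum fun c hc =>
            key_count hm0 hx (Finset.mem_filter.mp hc).2 hdvd
    have hup : (C.sigma fun c =>
        (Finset.range m).filter fun j => orderOf (c * x ^ j) = m).card ≤ S.card * m := by
      have hinj := Finset.card_le_card_of_injOn
        (s := C.sigma fun c => (Finset.range m).filter fun j => orderOf (c * x ^ j) = m)
        (t := S ×ˢ Finset.range m)
        (fun q : Σ _ : G, ℕ => (q.1 * x ^ q.2, q.2)) ?_ ?_
      · simpa [Finset.card_product] using hinj
      · rintro ⟨c, j⟩ hq
        rw [Finset.mem_coe, Finset.mem_sigma] at hq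
        obtain ⟨hc, hj⟩ := hq
        rw [Finset.mem_filter, Finset.mem_range] at hj
        exact Finset.mem_product.mpr
          ⟨Finset.mem_filter.mpr ⟨Finset.mem_univ _, hj.2⟩, Finset.mem_range.mpr hj.1⟩
      · rintro ⟨c, j⟩ - ⟨c', j'⟩ - heq
        simp only [Prod.mk.injEq] at heq
        obtain ⟨heq1, rfl⟩ := heq
        have hcc : c = c' := mul_right_cancel heq1
        subst hcc
        rfl
    calc C.card * m.totient ≤ _ := hlow
      _ ≤ S.card * m := hup
      _ = m * S.card := mul_comm _ _
  -- conjugacy class bound: |G| ≤ |S| * |C|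
  have horb : Fintype.card G ≤ S.card * C.card := by
    have hfib : ∀ a ∈ (Finset.univ : Finset G).image fun g => g * x * g⁻¹,
        ((Finset.univ : Finset G).filter fun g => g * x * g⁻¹ = a).card ≤ C.card := by
      intro a ha
      obtain ⟨g₀, -, hg₀⟩ := Finset.mem_image.mp ha
      apply Finset.card_le_card_of_injOn (fun g => g₀⁻¹ * g)
      · intro g hg
        rw [Finset.mem_coe, Finset.mem_filter] at hg
        rw [hC, Finset.mem_coe, Finset.mem_filter]
        refine ⟨Finset.mem_univ _, ?_⟩
        have h1 : g * x * g⁻¹ = g₀ * x * g₀⁻¹ := by rw [hg.2, hg₀]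
        show x * (g₀⁻¹ * g) = (g₀⁻¹ * g) * x
        calc x * (g₀⁻¹ * g) = g₀⁻¹ * (g₀ * x * g₀⁻¹) * g := by group
          _ = g₀⁻¹ * (g * x * g⁻¹) * g := by rw [h1]
          _ = (g₀⁻¹ * g) * x := by group
      · intro u _ v _ h
        exact mul_left_cancel h
    have himg : ((Finset.univ : Finset G).image fun g => g * x * g⁻¹) ⊆ S := by
      intro a ha
      obtain ⟨g, -, hg⟩ := Finset.mem_image.mp ha
      rw [hS, Finset.mem_filter]
      refine ⟨Finset.mem_univ _, ?_⟩
      have hsc : SemiconjBy g x (g * x * g⁻¹) := by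
        show g * x = g * x * g⁻¹ * g
        group
      rw [← hg, ← hx]
      exact (SemiconjBy.orderOf_eq g hsc).symm
    calc Fintype.card G = (Finset.univ : Finset G).card := rfl
      _ ≤ C.card * ((Finset.univ : Finset G).image fun g => g * x * g⁻¹).card :=
          Finset.card_le_mul_card_image _ _ hfib
      _ ≤ C.card * S.card := Nat.mul_le_mul_left _ (Finset.card_le_card himg)
      _ = S.card * C.card := mul_comm _ _
  calc Fintype.card G * m.totient ≤ (S.card * C.card) * m.totient :=
        Nat.mul_le_mul_right _ horb
    _ = S.card * (C.card * m.totient) := by ring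
    _ ≤ S.card * (m * S.card) := Nat.mul_le_mul_left _ hmain
    _ = m * S.card ^ 2 := by ring
    _ = m * k ^ 2 := by rw [hkS]
end

section
/- Let G be a finite group with maximal element order m, let x ∈ G have order m, and let X = ⟨x⟩. Then every coset of X in the centralizer C_G(x) contains at least φ(m) elements of order m. -/
theorem coset_many_max_order_elements (G : Type*) [Group G] [Fintype G]
    (m : ℕ)
    (hm : ∀ g : G, orderOf g ≤ m)
    (x : G) (hx : orderOf x = m)
    (y : G) (hy : y ∈ Subgroup.centralizer {x}) :
    Nat.totient m ≤
      Nat.card {g : G // y⁻¹ * g ∈ Subgroup.zpowers x ∧ orderOf g = m} := by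
  classical
  have hmpos : 0 < m := hx ▸ orderOf_pos x
  haveI : NeZero m := ⟨hmpos.ne'⟩
  have hcomm : Commute x y := (Subgroup.mem_centralizer_iff.mp hy x rfl)
  -- powers of coset elements
  have hpow : ∀ (s : ℤ) (n : ℕ), (y * x ^ s) ^ n = y ^ n * x ^ (s * n) := by
    intro s n
    rw [(hcomm.symm.zpow_right s).mul_pow, ← zpow_natCast (x ^ s), ← zpow_mul]
  have hdiff : ∀ (s t : ℤ) (n : ℕ),
      (y * x ^ s) ^ n = (y * x ^ t) ^ n * x ^ ((s - t) * n) := by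
    intro s t n
    rw [hpow, hpow, mul_assoc, ← zpow_add]
    ring_nf
  -- every element commuting with x has order dividing m
  have factA : ∀ g : G, Commute x g → orderOf g ∣ m := by
    intro g hg
    obtain ⟨z, -, hz⟩ := hg.exists_orderOf_eq_lcm
    have h1 : m ∣ orderOf z := by rw [hz, ← hx]; exact Nat.dvd_lcm_left _ _
    have h2 : orderOf g ∣ orderOf z := by rw [hz]; exact Nat.dvd_lcm_right _ _
    have hzm : orderOf z = m :=
      le_antisymm (hm z) (Nat.le_of_dvd (orderOf_pos z) h1)
    exact hzm ▸ h2
  -- the set of "bad" primes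
  set P : Finset ℕ :=
    m.primeFactors.filter (fun p => ∃ t : ℤ, (y * x ^ t) ^ (m / p) = 1) with hP
  -- CRT-style induction: one coset element killed by m/p for all p ∈ P
  have keyB : ∀ Q : Finset ℕ, Q ⊆ P → ∃ s : ℤ, ∀ p ∈ Q, (y * x ^ s) ^ (m / p) = 1 := by
    intro Q
    induction Q using Finset.induction with
    | empty => exact fun _ => ⟨0, fun p hp => absurd hp (Finset.notMem_empty p)⟩
    | insert _ _ hpQ =>
      rename_i p Q ih
      intro hsub
      obtain ⟨s, hs⟩ := ih (fun q hq => hsub (Finset.mem_insert_of_mem hq))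
      have hpP : p ∈ P := hsub (Finset.mem_insert_self p Q)
      have hpprime : p.Prime := Nat.prime_of_mem_primeFactors (Finset.mem_filter.mp hpP).1
      have hpm : p ∣ m := Nat.dvd_of_mem_primeFactors (Finset.mem_filter.mp hpP).1
      obtain ⟨t, ht⟩ := (Finset.mem_filter.mp hpP).2
      -- product of the primes already handled
      set N : ℕ := Q.prod id with hN
      have hprimes : ∀ q ∈ Q, q.Prime := fun q hq =>
        Nat.prime_of_mem_primeFactors
          (Finset.mem_filter.mp (hsub (Finset.mem_insert_of_mem hq))).1
      have hcop : Nat.Coprime N p := by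
        rw [Nat.coprime_comm, Nat.Prime.coprime_iff_not_dvd hpprime]
        intro hdvd
        obtain ⟨q, hqQ, hq⟩ := (Prime.dvd_finset_prod_iff hpprime.prime id).mp hdvd
        exact hpQ (((Nat.prime_dvd_prime_iff_eq hpprime (hprimes q hqQ)).mp hq) ▸ hqQ)
      obtain ⟨a, b, hab⟩ := hcop.isCoprime
      refine ⟨s + (t - s) * a * N, fun q hq => ?_⟩
      rcases Finset.mem_insert.mp hq with rfl | hqQ
      · rw [hdiff _ t, ht, one_mul]
        rw [← orderOf_dvd_iff_zpow_eq_one, hx]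
        have heq : (s + (t - s) * a * N - t) = (s - t) * (b * q) := by
          have : a * (N : ℤ) = 1 - b * q := by linarith [hab]
          rw [mul_assoc, this]; ring
        have hq' : ((q : ℤ)) * ((m / q : ℕ) : ℤ) = (m : ℤ) := by
          rw [← Nat.cast_mul, Nat.mul_div_cancel' hpm]
        rw [heq]
        refine ⟨(s - t) * b, ?_⟩
        calc (s - t) * (b * (q:ℤ)) * ((m / q : ℕ) : ℤ)
            = (s - t) * b * ((q:ℤ) * ((m / q : ℕ) : ℤ)) := by ring
          _ = (m:ℤ) * ((s - t) * b) := by rw [hq']; ring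
      · rw [hdiff _ s, hs q hqQ, one_mul]
        rw [← orderOf_dvd_iff_zpow_eq_one, hx]
        obtain ⟨N', hN'⟩ : (q : ℤ) ∣ (N : ℤ) := Int.natCast_dvd_natCast.mpr (Finset.dvd_prod_of_mem id hqQ)
        have hqm : q ∣ m := Nat.dvd_of_mem_primeFactors
          (Finset.mem_filter.mp (hsub (Finset.mem_insert_of_mem hqQ))).1
        have hq' : ((q : ℤ)) * ((m / q : ℕ) : ℤ) = (m : ℤ) := by
          rw [← Nat.cast_mul, Nat.mul_div_cancel' hqm]
        refine ⟨(t - s) * a * N', ?_⟩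
        have : (s + (t - s) * a * N - s) * ((m / q : ℕ) : ℤ)
            = (t - s) * a * N' * ((q:ℤ) * ((m / q : ℕ) : ℤ)) := by
          rw [hN']; ring
        rw [this, hq']; ring
  obtain ⟨s, hs⟩ := keyB P (Finset.Subset.refl P)
  -- all coprime shifts of y * x^s have order m
  have keyC : ∀ u : ℕ, Nat.Coprime u m → orderOf (y * x ^ (s + (u : ℤ))) = m := by
    intro u hu
    set g : G := y * x ^ (s + (u : ℤ)) with hg
    have hcg : Commute x g := hcomm.mul_right (Commute.zpow_right (Commute.refl x) _)
    have hdvd : orderOf g ∣ m := factA g hcg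
    by_contra hne
    have hne0 : m / orderOf g ≠ 1 := by
      intro h
      exact hne (by
        have := Nat.div_mul_cancel hdvd
        rw [h, one_mul] at this
        exact this)
    obtain ⟨p, pp, hpd⟩ := Nat.exists_prime_and_dvd hne0
    have hpm : p ∣ m := hpd.trans (Nat.div_dvd_of_dvd hdvd)
    have hdmp : orderOf g ∣ m / p := by
      obtain ⟨c, hc⟩ := hpd
      have : m = p * (orderOf g * c) := by
        rw [← Nat.div_mul_cancel hdvd, hc]; ring
      rw [this, Nat.mul_div_cancel_left _ pp.pos]
      exact Dvd.intro c rfl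
    have hgp : g ^ (m / p) = 1 := orderOf_dvd_iff_pow_eq_one.mp hdmp
    have hpP : p ∈ P := by
      rw [hP, Finset.mem_filter, Nat.mem_primeFactors]
      exact ⟨⟨pp, hpm, hmpos.ne'⟩, ⟨s + (u : ℤ), hgp⟩⟩
    have hxu : x ^ ((u : ℤ) * ((m / p : ℕ) : ℤ)) = 1 := by
      have := hdiff (s + (u : ℤ)) s (m / p)
      rw [hgp, hs p hpP, one_mul] at this
      have h2 : (s + (u:ℤ) - s) = (u : ℤ) := by ring
      rw [h2] at this
      exact this.symm
    rw [← orderOf_dvd_iff_zpow_eq_one, hx] at hxu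
    -- deduce p ∣ u, contradiction with coprimality
    have hq' : ((p : ℤ)) * ((m / p : ℕ) : ℤ) = (m : ℤ) := by
      rw [← Nat.cast_mul, Nat.mul_div_cancel' hpm]
    have hmp0 : ((m / p : ℕ) : ℤ) ≠ 0 := by
      have : 0 < m / p := Nat.div_pos (Nat.le_of_dvd hmpos hpm) pp.pos
      exact_mod_cast this.ne'
    have hpu : (p : ℤ) ∣ (u : ℤ) := by
      have : ((p : ℤ)) * ((m / p : ℕ) : ℤ) ∣ (u : ℤ) * ((m / p : ℕ) : ℤ) := hq' ▸ hxu
      obtain ⟨c, hc⟩ := this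
      refine ⟨c, ?_⟩
      apply mul_right_cancel₀ hmp0
      rw [hc]; ring
    have hpu' : p ∣ u := Int.natCast_dvd_natCast.mp hpu
    exact pp.ne_one ((Nat.Coprime.coprime_dvd_left hpu' hu).eq_one_of_dvd hpm)
  -- build the injection from (ZMod m)ˣ
  have f : ∀ u : (ZMod m)ˣ, y⁻¹ * (y * x ^ (s + (((u : ZMod m).val : ℕ) : ℤ))) ∈ Subgroup.zpowers x ∧
      orderOf (y * x ^ (s + (((u : ZMod m).val : ℕ) : ℤ))) = m := by
    intro u
    constructor
    · rw [inv_mul_cancel_left]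
      exact ⟨s + (((u : ZMod m).val : ℕ) : ℤ), rfl⟩
    · exact keyC (u : ZMod m).val (ZMod.val_coe_unit_coprime u)
  have hinj : Function.Injective
      (fun u : (ZMod m)ˣ =>
        (⟨y * x ^ (s + (((u : ZMod m).val : ℕ) : ℤ)), f u⟩ :
          {g : G // y⁻¹ * g ∈ Subgroup.zpowers x ∧ orderOf g = m})) := by
    intro u v huv
    have h1 : y * x ^ (s + (((u : ZMod m).val : ℕ) : ℤ))
        = y * x ^ (s + (((v : ZMod m).val : ℕ) : ℤ)) := congrArg Subtype.val huv
    have h2 : x ^ (((u : ZMod m).val : ℕ) : ℤ) = x ^ (((v : ZMod m).val : ℕ) : ℤ) := by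
      have := mul_left_cancel h1
      rw [zpow_add, zpow_add] at this
      exact mul_left_cancel this
    rw [zpow_natCast, zpow_natCast, pow_eq_pow_iff_modEq, hx] at h2
    have h3 : (u : ZMod m).val = (v : ZMod m).val :=
      Nat.ModEq.eq_of_lt_of_lt h2 (ZMod.val_lt _) (ZMod.val_lt _)
    exact Units.ext (ZMod.val_injective m h3)
  calc Nat.totient m = Nat.card (ZMod m)ˣ := by
        rw [Nat.card_eq_fintype_card, ZMod.card_units_eq_totient]
    _ ≤ _ := Nat.card_le_card_of_injective _ hinj
end

section
/- Let m be a positive integer, p a prime dividing m, q = m/p, and let s be an integer such that s ≡ 1 (mod r) for every prime r dividing m, and additionally s ≡ 1 (mod 4) if 4 divides m. Then 1 + s + s² + ... + s^{q-1} ≡ q (mod m). -/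
/-- Splitting a geometric sum: `∑_{i < a*b} s^i = (∑_{i<a} s^i) * (∑_{j<b} (s^a)^j)`. -/
lemma geom_sum_split (s : ℤ) (a : ℕ) : ∀ b : ℕ,
    (∑ i ∈ Finset.range (a * b), s ^ i) =
      (∑ i ∈ Finset.range a, s ^ i) * (∑ j ∈ Finset.range b, (s ^ a) ^ j) := by
  intro b
  induction b with
  | zero => simp
  | succ b ih =>
      have h1 : a * (b + 1) = a * b + a := by ring
      rw [h1, Finset.sum_range_add, ih, Finset.sum_range_succ]
      have h2 : (∑ i ∈ Finset.range a, s ^ (a * b + i)) =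
          (s ^ a) ^ b * (∑ i ∈ Finset.range a, s ^ i) := by
        rw [Finset.mul_sum]
        exact Finset.sum_congr rfl fun i _ => by rw [pow_add, pow_mul]
      rw [h2]; ring

/-- `t - 1` divides a geometric sum in `t` minus its length. -/
lemma sub_one_dvd_geom_sum_sub (t : ℤ) (n : ℕ) :
    (t - 1) ∣ (∑ j ∈ Finset.range n, t ^ j) - (n : ℤ) := by
  have h : (∑ j ∈ Finset.range n, t ^ j) - (n : ℤ) =
      ∑ j ∈ Finset.range n, (t ^ j - 1) := by
    rw [Finset.sum_sub_distrib]
    simp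
  rw [h]
  exact Finset.dvd_sum fun j _ => sub_one_dvd_pow_sub_one t j

/-- An odd prime divides the sum `0 + 1 + ⋯ + (p-1)`. -/
lemma odd_prime_dvd_sum_range (p : ℕ) (hp : p.Prime) (hodd : Odd p) :
    (p : ℤ) ∣ (∑ j ∈ Finset.range p, (j : ℤ)) := by
  have h := Finset.sum_range_id_mul_two p
  have hcast : (∑ j ∈ Finset.range p, (j : ℤ)) * 2 = (p : ℤ) * ((p : ℤ) - 1) := by
    have := congrArg (Nat.cast : ℕ → ℤ) h
    push_cast [Nat.cast_sub hp.one_lt.le] at this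
    push_cast
    linarith
  have hdvd2 : (p : ℤ) ∣ 2 * (∑ j ∈ Finset.range p, (j : ℤ)) := by
    rw [mul_comm, hcast]
    exact Dvd.intro _ rfl
  have hcop : IsCoprime (p : ℤ) 2 := by
    rw [Int.isCoprime_iff_gcd_eq_one]
    have h2 : ¬ (2 ∣ p) := by
      have := Nat.odd_iff.mp hodd
      omega
    simpa [Int.gcd] using (Nat.Prime.coprime_iff_not_dvd Nat.prime_two).mpr h2 |>.symm
  exact hcop.dvd_of_dvd_mul_left hdvd2

/-- The key inductive lemma. -/
lemma geom_sum_congr_aux : ∀ q : ℕ, ∀ p : ℕ, p.Prime → ∀ s : ℤ,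
    (∀ r : ℕ, r.Prime → r ∣ p * q → (r : ℤ) ∣ s - 1) →
    ((4 ∣ p * q) → (4 : ℤ) ∣ s - 1) →
    ((p : ℤ) * q) ∣ (∑ i ∈ Finset.range q, s ^ i) - (q : ℤ) := by
  intro q
  induction q using Nat.strong_induction_on with
  | _ q ih =>
    intro p hp s hs hs4
    rcases Nat.lt_or_ge q 2 with hq2 | hq2
    · interval_cases q <;> simp
    -- q ≥ 2 : split off the least prime factor ℓ of q
    have hqne : q ≠ 1 := by omega
    set ℓ := q.minFac with hℓdef
    have hℓ : ℓ.Prime := Nat.minFac_prime hqne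
    have hℓdvd : ℓ ∣ q := Nat.minFac_dvd q
    set q' := q / ℓ with hq'def
    have hqeq : q = ℓ * q' := (Nat.mul_div_cancel' hℓdvd).symm
    have hq'pos : 0 < q' := by
      rcases Nat.eq_zero_or_pos q' with h | h
      · rw [h, mul_zero] at hqeq; omega
      · exact h
    have hq'lt : q' < q := by
      have h2 : 2 ≤ ℓ := hℓ.two_le
      calc q' < ℓ * q' := by nlinarith
        _ = q := hqeq.symm
    have hq'q : q' ∣ q := ⟨ℓ, by rw [hqeq]; ring⟩
    -- apply induction hypothesis to q'
    have hIH : ((p : ℤ) * q') ∣ (∑ i ∈ Finset.range q', s ^ i) - (q' : ℤ) := by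
      refine ih q' hq'lt p hp s (fun r hr hrd => hs r hr ?_) (fun h4 => hs4 ?_)
      · exact hrd.trans (mul_dvd_mul_left p hq'q)
      · exact h4.trans (mul_dvd_mul_left p hq'q)
    set A : ℤ := ∑ i ∈ Finset.range q', s ^ i with hA
    set t : ℤ := s ^ q' with ht
    set T : ℤ := ∑ j ∈ Finset.range ℓ, t ^ j with hT
    have hsplit : (∑ i ∈ Finset.range q, s ^ i) = A * T := by
      rw [hqeq, mul_comm ℓ q']
      exact geom_sum_split s q' ℓ
    -- q' divides A
    have hq'A : (q' : ℤ) ∣ A := by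
      have h1 : (q' : ℤ) ∣ (A - q') := dvd_trans ⟨p, by push_cast; ring⟩ hIH
      have h2 := dvd_add h1 (dvd_refl (q' : ℤ))
      rwa [sub_add_cancel] at h2
    -- T - ℓ = (t - 1) * D
    set D : ℤ := ∑ j ∈ Finset.range ℓ, (∑ l ∈ Finset.range j, t ^ l) with hD
    have hTD : T - (ℓ : ℤ) = (t - 1) * D := by
      have h1 : T - (ℓ : ℤ) = ∑ j ∈ Finset.range ℓ, (t ^ j - 1) := by
        rw [hT, Finset.sum_sub_distrib]; simp
      rw [h1, hD, Finset.mul_sum]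
      exact Finset.sum_congr rfl fun j _ => (mul_geom_sum t j).symm
    have hsdvd : ∀ r : ℕ, r.Prime → r ∣ p * q → (r : ℤ) ∣ t - 1 := fun r hr hrd =>
      (hs r hr hrd).trans (sub_one_dvd_pow_sub_one s q')
    have hpq : (p : ℕ) ∣ p * q := dvd_mul_right p q
    have hℓq : (ℓ : ℕ) ∣ p * q := hℓdvd.trans (dvd_mul_left q p)
    have hkey : ((p : ℤ) * ℓ) ∣ (t - 1) * D := by
      rcases eq_or_ne p ℓ with hpe | hpe
      · rcases hp.eq_two_or_odd' with h2 | hodd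
        · -- p = ℓ = 2 : use the mod 4 hypothesis
          have hl2 : ℓ = 2 := by omega
          have h4m : (4 : ℕ) ∣ p * q := by
            rw [hqeq, h2, hl2]
            exact ⟨q', by ring⟩
          have h4 : (4 : ℤ) ∣ t - 1 := (hs4 h4m).trans (sub_one_dvd_pow_sub_one s q')
          have hpl4 : ((p : ℤ)) * (ℓ : ℤ) = 4 := by rw [h2, hl2]; norm_num
          rw [hpl4]
          exact h4.mul_right D
        · -- p = ℓ odd : ℓ ∣ t - 1 and ℓ ∣ D
          have hoddℓ : Odd ℓ := hpe ▸ hodd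
          have hℓt : (ℓ : ℤ) ∣ t - 1 := hsdvd ℓ hℓ hℓq
          have hℓD : (ℓ : ℤ) ∣ D := by
            have h1 : (t - 1) ∣ (D - ∑ j ∈ Finset.range ℓ, (j : ℤ)) := by
              have heq : D - (∑ j ∈ Finset.range ℓ, (j : ℤ)) =
                  ∑ j ∈ Finset.range ℓ, ((∑ l ∈ Finset.range j, t ^ l) - (j : ℤ)) := by
                rw [hD, Finset.sum_sub_distrib]
              rw [heq]
              exact Finset.dvd_sum fun j _ => sub_one_dvd_geom_sum_sub t j
            have h2 : (ℓ : ℤ) ∣ (D - ∑ j ∈ Finset.range ℓ, (j : ℤ)) := hℓt.trans h1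
            have h3 : (ℓ : ℤ) ∣ (∑ j ∈ Finset.range ℓ, (j : ℤ)) :=
              odd_prime_dvd_sum_range ℓ hℓ hoddℓ
            have h4 := dvd_add h2 h3
            rwa [sub_add_cancel] at h4
          rw [hpe]
          exact mul_dvd_mul hℓt hℓD
      · -- p ≠ ℓ : both divide t - 1, and they are coprime
        have hpt : (p : ℤ) ∣ t - 1 := hsdvd p hp hpq
        have hℓt : (ℓ : ℤ) ∣ t - 1 := hsdvd ℓ hℓ hℓq
        have hcop : IsCoprime (p : ℤ) (ℓ : ℤ) := by
          rw [Int.isCoprime_iff_gcd_eq_one]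
          simpa [Int.gcd] using (Nat.coprime_primes hp hℓ).mpr hpe
        exact (hcop.mul_dvd hpt hℓt).mul_right D
    -- assemble
    have hfinal : (∑ i ∈ Finset.range q, s ^ i) - (q : ℤ) =
        A * ((t - 1) * D) + (ℓ : ℤ) * (A - q') := by
      rw [hsplit, ← hTD, hqeq]
      push_cast
      ring
    rw [hfinal, hqeq]
    push_cast
    refine dvd_add ?_ ?_
    · obtain ⟨a, ha⟩ := hq'A
      obtain ⟨b, hb⟩ := hkey
      rw [ha, hb]
      exact ⟨a * b, by ring⟩
    · obtain ⟨c, hc⟩ := hIH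
      rw [hc]
      exact ⟨c, by push_cast; ring⟩

theorem geom_sum_congr (m : ℕ) (hm : 0 < m) (p : ℕ) (hp : p.Prime) (hpm : p ∣ m)
    (q : ℕ) (hq : q = m / p) (s : ℤ)
    (hs : ∀ r : ℕ, r.Prime → r ∣ m → s ≡ 1 [ZMOD r])
    (hs4 : 4 ∣ m → s ≡ 1 [ZMOD 4]) :
    (∑ i ∈ Finset.range q, s ^ i) ≡ (q : ℤ) [ZMOD m] := by
  have hmeq : m = p * q := by
    rw [hq, Nat.mul_div_cancel' hpm]
  have haux := geom_sum_congr_aux q p hp s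
    (fun r hr hrd => by
      have h := (hs r hr (by rw [hmeq]; exact hrd)).dvd
      exact dvd_sub_comm.mp h)
    (fun h4 => by
      have h := (hs4 (by rw [hmeq]; exact h4)).dvd
      exact_mod_cast dvd_sub_comm.mp h)
  rw [Int.modEq_iff_dvd]
  have hcast : (m : ℤ) = (p : ℤ) * q := by rw [hmeq]; push_cast; ring
  rw [hcast]
  exact dvd_sub_comm.mp haux
end

section
/- Let G be a finite group with maximal element order m and exactly k elements of order m. Then there exists a nonnegative integer a such that |G| divides k·m^a. -/
open MulAction in
lemma free_action_card_dvd {P : Type*} [Group P] [Fintype P] {S : Type*} [Fintype S]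
    [MulAction P S] (h : ∀ (x : P) (s : S), x • s = s → x = 1) :
    Fintype.card P ∣ Fintype.card S := by
  classical
  have hstab : ∀ s : S, stabilizer P s = ⊥ := by
    intro s
    ext x
    simp only [mem_stabilizer_iff, Subgroup.mem_bot]
    exact ⟨h x s, fun hx => by simp [hx]⟩
  letI : Fintype (orbitRel.Quotient P S) := Fintype.ofFinite _
  rw [MulAction.card_eq_sum_card_group_div_card_stabilizer P S]
  have : ∀ ω : orbitRel.Quotient P S,
      Fintype.card P / Fintype.card (stabilizer P (Quotient.out ω)) = Fintype.card P := by
    intro ω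
    have h1 : Fintype.card (stabilizer P (Quotient.out ω)) = 1 := by
      rw [← Nat.card_eq_fintype_card, hstab, Subgroup.card_bot]
    rw [h1, Nat.div_one]
  rw [Finset.sum_congr rfl (fun ω _ => this ω), Finset.sum_const, smul_eq_mul]
  exact dvd_mul_left _ _

theorem order_divides_k_times_power (G : Type*) [Group G] [Fintype G]
    (m k : ℕ)
    (hm : ∀ g : G, orderOf g ≤ m) (hmex : ∃ g : G, orderOf g = m)
    (hk : k = Nat.card {g : G // orderOf g = m}) :
    ∃ a : ℕ, Fintype.card G ∣ k * m ^ a := by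
  classical
  obtain ⟨g0, hg0⟩ := hmex
  have hm0 : 0 < m := hg0 ▸ orderOf_pos g0
  have hk0 : 0 < k := by
    rw [hk]
    exact @Nat.card_pos _ ⟨⟨g0, hg0⟩⟩ _
  set N := Fintype.card G with hN
  refine ⟨N, ?_⟩
  have hN0 : N ≠ 0 := Fintype.card_ne_zero
  have hkm0 : k * m ^ N ≠ 0 := by positivity
  rw [← Nat.factorization_le_iff_dvd hN0 hkm0, Finsupp.le_def]
  intro p
  by_cases hp : p.Prime
  · haveI : Fact p.Prime := ⟨hp⟩
    rw [Nat.factorization_mul hk0.ne' (by positivity), Nat.factorization_pow]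
    simp only [Finsupp.coe_add, Finsupp.coe_smul, Pi.add_apply, Pi.smul_apply, smul_eq_mul]
    by_cases hpm : p ∣ m
    · have h1 : 1 ≤ m.factorization p := hp.factorization_pos_of_dvd hm0.ne' hpm
      have h2 : N.factorization p < N := Nat.factorization_lt p hN0
      calc N.factorization p ≤ N * 1 := by omega
        _ ≤ N * m.factorization p := by exact Nat.mul_le_mul_left N h1
        _ ≤ k.factorization p + N * m.factorization p := Nat.le_add_left _ _
    · -- p does not divide m : show p ^ (N.factorization p) ∣ k
      suffices hdvd : p ^ (N.factorization p) ∣ k by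
        have := (hp.pow_dvd_iff_le_factorization hk0.ne').mp hdvd
        omega
      obtain ⟨P⟩ : Nonempty (Sylow p G) := inferInstance
      have hcardP : Nat.card P = p ^ N.factorization p := by
        rw [P.card_eq_multiplicity, Nat.card_eq_fintype_card]
      have hconj : ∀ (x y : G), orderOf (x * y * x⁻¹) = orderOf y := by
        intro x y
        have := orderOf_injective (MulAut.conj x).toMonoidHom (MulEquiv.injective _) y
        simpa using this
      letI : MulAction P {g : G // orderOf g = m} :=
        { smul := fun x y => ⟨(x : G) * (y : G) * (x : G)⁻¹, by rw [hconj]; exact y.2⟩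
          one_smul := fun y => by
            apply Subtype.ext
            show ((1 : P) : G) * (y : G) * ((1 : P) : G)⁻¹ = y
            simp
          mul_smul := fun x z y => by
            apply Subtype.ext
            show ((x * z : P) : G) * (y : G) * ((x * z : P) : G)⁻¹ =
              (x : G) * ((z : G) * (y : G) * (z : G)⁻¹) * (x : G)⁻¹
            simp [mul_assoc] }
      have hfree : ∀ (x : P) (s : {g : G // orderOf g = m}), x • s = s → x = 1 := by
        intro x s hxs
        have hcomm : Commute (x : G) (s : G) := by
          have h0 : (x : G) * (s : G) * (x : G)⁻¹ = (s : G) := congrArg Subtype.val hxs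
          have : (x : G) * (s : G) = (x : G) * (s : G) * (x : G)⁻¹ * (x : G) := by group
          rw [Commute, SemiconjBy, this, h0]
        obtain ⟨j, hj⟩ := P.isPGroup' x
        obtain ⟨i, -, hi⟩ := (Nat.dvd_prime_pow hp).mp (orderOf_dvd_of_pow_eq_one hj)
        have hxord : orderOf (x : G) = p ^ i := by rw [Subgroup.orderOf_coe, hi]
        have hcop : Nat.Coprime (orderOf (x : G)) (orderOf (s : G)) := by
          rw [hxord, s.2]
          exact (Nat.Prime.coprime_iff_not_dvd hp |>.mpr hpm).pow_left _
        have hord := hcomm.orderOf_mul_eq_mul_orderOf_of_coprime hcop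
        have hle := hm ((x : G) * (s : G))
        rw [hord, s.2] at hle
        have hxpos : 0 < orderOf (x : G) := orderOf_pos _
        have : orderOf (x : G) = 1 := by nlinarith
        have : (x : G) = 1 := orderOf_eq_one_iff.mp this
        exact Subtype.ext this
      have hdvd' : Fintype.card P ∣ Fintype.card {g : G // orderOf g = m} :=
        free_action_card_dvd hfree
      rw [← Nat.card_eq_fintype_card, ← Nat.card_eq_fintype_card, hcardP, ← hk] at hdvd'
      exact hdvd'
  · rw [Nat.factorization_eq_zero_of_not_prime N hp]
    exact Nat.zero_le _
end

section
/- Let G be a finite group with maximal element order m, and let p be a prime dividing |G| but not m. Then p divides k, the number of elements of order m in G. -/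
theorem prime_not_dvd_m_dvd_k (G : Type*) [Group G] [Fintype G]
    (m k : ℕ)
    (hm : ∀ g : G, orderOf g ≤ m) (hmex : ∃ g : G, orderOf g = m)
    (hk : k = Nat.card {g : G // orderOf g = m})
    (p : ℕ) (hp : p.Prime) (hpG : p ∣ Fintype.card G) (hpm : ¬ p ∣ m) :
    p ∣ k := by
  classical
  obtain ⟨g0, hg0⟩ := hmex
  have hm1 : 1 ≤ m := hg0 ▸ orderOf_pos g0
  haveI : Fact p.Prime := ⟨hp⟩
  obtain ⟨x, hx⟩ := exists_prime_orderOf_dvd_card p hpG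
  set c : ConjAct G := ConjAct.toConjAct x with hc_def
  have hc : orderOf c = p := by
    rw [← hx]
    exact MulEquiv.orderOf_eq ConjAct.toConjAct x
  set H := Subgroup.zpowers c with hH
  have hHp : IsPGroup p H := by
    apply IsPGroup.of_card (n := 1)
    rw [Nat.card_zpowers, hc, pow_one]
  have horder_conj : ∀ (u : ConjAct G) (g : G), orderOf (u • g) = orderOf g := by
    intro u g
    rw [ConjAct.smul_def]
    have : ConjAct.ofConjAct u * g * (ConjAct.ofConjAct u)⁻¹ =
        (MulAut.conj (ConjAct.ofConjAct u)) g := rfl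
    rw [this, MulEquiv.orderOf_eq]
  let S : SubMulAction H G :=
    { carrier := {g : G | orderOf g = m}
      smul_mem' := by
        intro h g hg
        show orderOf ((h : ConjAct G) • g) = m
        rw [horder_conj]
        exact hg }
  have hfix : IsEmpty (MulAction.fixedPoints H S) := by
    constructor
    rintro ⟨⟨g, hg⟩, hfixg⟩
    have := hfixg (⟨c, Subgroup.mem_zpowers c⟩ : H)
    have hcg : c • g = g := congrArg Subtype.val this
    rw [ConjAct.smul_def] at hcg
    have hofc : ConjAct.ofConjAct c = x := rfl
    rw [hofc] at hcg
    have hcomm : Commute x g := by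
      have := hcg
      rw [mul_inv_eq_iff_eq_mul] at this
      exact this
    have hcop : Nat.Coprime (orderOf x) (orderOf g) := by
      rw [hx, hg]
      exact hp.coprime_iff_not_dvd.mpr hpm
    have hord : orderOf (x * g) = p * m := by
      rw [hcomm.orderOf_mul_eq_mul_orderOf_of_coprime hcop, hx, hg]
    have h1 := hm (x * g)
    rw [hord] at h1
    have : 2 * m ≤ p * m := Nat.mul_le_mul_right m hp.two_le
    omega
  have hmod := hHp.card_modEq_card_fixedPoints S
  rw [Nat.card_of_isEmpty (α := MulAction.fixedPoints H S)] at hmod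
  have hdvd : p ∣ Nat.card S := (Nat.modEq_zero_iff_dvd).mp hmod
  have hcardeq : Nat.card S = Nat.card {g : G // orderOf g = m} := rfl
  rw [hk, ← hcardeq]
  exact hdvd
end

section
/- Let G be a finite group whose maximal element order is m = 2p for an odd prime p, with exactly k elements of order 2p. Then |G| ≤ 2k(k+1). -/
open Finset MulAction

section aux
variable {G : Type*} [Group G] [Fintype G]

lemma order_dvd_of_commute {p : ℕ} (hp : p.Prime) {x g : G}
    (hx : orderOf x = 2 * p) (hm : ∀ a : G, orderOf a ≤ 2 * p)
    (hc : Commute g x) : orderOf g ∣ 2 * p := by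
  have h2p : (2 : ℕ) * p ≠ 0 := Nat.mul_ne_zero two_ne_zero hp.pos.ne'
  have hg0 : orderOf g ≠ 0 := (orderOf_pos g).ne'
  rw [← Nat.factorization_le_iff_dvd hg0 h2p, Finsupp.le_def]
  intro q
  by_cases hq : q.Prime
  · set n := orderOf g with hn
    have h1 : orderOf (g ^ (ordCompl[q] n)) = ordProj[q] n := by
      rw [orderOf_pow, ← hn, Nat.gcd_eq_right (Nat.ordCompl_dvd n q),
        Nat.div_div_self (Nat.ordProj_dvd n q) hg0]
    have h2 : orderOf (x ^ (ordProj[q] (2 * p))) = ordCompl[q] (2 * p) := by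
      rw [orderOf_pow, hx, Nat.gcd_eq_right (Nat.ordProj_dvd _ q)]
    have hcomm : Commute (g ^ (ordCompl[q] n)) (x ^ (ordProj[q] (2 * p))) :=
      hc.pow_pow _ _
    have hcop : (orderOf (g ^ (ordCompl[q] n))).Coprime
        (orderOf (x ^ (ordProj[q] (2 * p)))) := by
      rw [h1, h2]
      exact Nat.Coprime.pow_left _ (Nat.coprime_ordCompl hq h2p)
    have hle := hm (g ^ (ordCompl[q] n) * x ^ (ordProj[q] (2 * p)))
    rw [hcomm.orderOf_mul_eq_mul_orderOf_of_coprime hcop, h1, h2] at hle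
    have hle2 : ordProj[q] n * ordCompl[q] (2 * p) ≤ ordProj[q] (2 * p) * ordCompl[q] (2 * p) := by
      rwa [Nat.ordProj_mul_ordCompl_eq_self]
    have hpow : q ^ n.factorization q ≤ q ^ (2 * p).factorization q :=
      Nat.le_of_mul_le_mul_right hle2 (Nat.ordCompl_pos q h2p)
    exact (Nat.pow_le_pow_iff_right hq.one_lt).mp hpow
  · simp [Nat.factorization_eq_zero_of_not_prime _ hq]

lemma dvd_two_mul_prime {p d : ℕ} (hp : p.Prime) (h : d ∣ 2 * p) :
    d = 1 ∨ d = 2 ∨ d = p ∨ d = 2 * p := by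
  by_cases hpd : p ∣ d
  · obtain ⟨e, rfl⟩ := hpd
    have he : e ∣ 2 := by
      have h2 : p * e ∣ p * 2 := by rwa [mul_comm p 2]
      exact (Nat.mul_dvd_mul_iff_left hp.pos).mp h2
    rcases (Nat.prime_two.eq_one_or_self_of_dvd e he) with rfl | rfl
    · right; right; left; exact mul_one p
    · right; right; right; exact mul_comm p 2
  · have hcop : Nat.Coprime d p := ((hp.coprime_iff_not_dvd).mpr hpd).symm
    have hd2 : d ∣ 2 := hcop.dvd_of_dvd_mul_right h
    rcases (Nat.prime_two.eq_one_or_self_of_dvd d hd2) with rfl | rfl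
    · left; rfl
    · right; left; rfl

end aux

theorem bound_for_m_eq_two_p (G : Type*) [Group G] [Fintype G]
    (p : ℕ) (hp : p.Prime) (hodd : Odd p)
    (m k : ℕ) (hm2p : m = 2 * p)
    (hm : ∀ g : G, orderOf g ≤ m) (hmex : ∃ g : G, orderOf g = m)
    (hk : k = Nat.card {g : G // orderOf g = m}) :
    Fintype.card G ≤ 2 * k * (k + 1) := by
  classical
  subst hm2p
  obtain ⟨x, hx⟩ := hmex
  have hp2 : p ≠ 2 := by
    rintro rfl; exact (Nat.odd_iff.mp hodd).symm.trans_ne (by norm_num) rfl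
  have hp1 : 1 < p := hp.one_lt
  -- k as a finset card
  have hk' : k = (univ.filter fun g : G => orderOf g = 2 * p).card := by
    rw [hk, Nat.card_eq_fintype_card, Fintype.card_subtype]
  -- basic orders
  have hx2 : orderOf (x ^ 2) = p := by
    rw [orderOf_pow, hx, Nat.gcd_eq_right ⟨p, rfl⟩, Nat.mul_div_cancel_left _ (by norm_num)]
  have hxp : orderOf (x ^ p) = 2 := by
    rw [orderOf_pow, hx, Nat.gcd_eq_right ⟨2, mul_comm 2 p⟩, mul_comm,
      Nat.mul_div_cancel_left _ hp.pos]
  set Cf : Finset G := univ.filter (fun g => Commute g x) with hCf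
  set C1 : Finset G := Cf.filter (fun g => orderOf g = 1) with hC1
  set C2 : Finset G := Cf.filter (fun g => orderOf g = 2) with hC2
  set Cp : Finset G := Cf.filter (fun g => orderOf g = p) with hCp
  set C2p : Finset G := Cf.filter (fun g => orderOf g = 2 * p) with hC2p
  have hsub : Cf ⊆ C1 ∪ C2 ∪ Cp ∪ C2p := by
    intro g hg
    have hcg : Commute g x := (Finset.mem_filter.mp hg).2
    simp only [Finset.mem_union]
    rcases dvd_two_mul_prime hp (order_dvd_of_commute hp hx hm hcg) with h | h | h | h
    · exact Or.inl (Or.inl (Or.inl (Finset.mem_filter.mpr ⟨hg, h⟩)))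
    · exact Or.inl (Or.inl (Or.inr (Finset.mem_filter.mpr ⟨hg, h⟩)))
    · exact Or.inl (Or.inr (Finset.mem_filter.mpr ⟨hg, h⟩))
    · exact Or.inr (Finset.mem_filter.mpr ⟨hg, h⟩)
  -- the two injections into C2p
  set Im1 : Finset G := C2.image (fun u => u * x ^ 2) with hIm1
  set Im2 : Finset G := Cp.image (fun v => v * x ^ p) with hIm2
  have hIm1sub : Im1 ⊆ C2p := by
    intro g hg
    obtain ⟨u, hu, rfl⟩ := Finset.mem_image.mp hg
    obtain ⟨hu1, hu2⟩ := Finset.mem_filter.mp hu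
    have hcu : Commute u x := (Finset.mem_filter.mp hu1).2
    have hcu2 : Commute u (x ^ 2) := hcu.pow_right 2
    have hcop : (orderOf u).Coprime (orderOf (x ^ 2)) := by
      rw [hu2, hx2]; exact Nat.coprime_two_left.mpr (by exact hp.odd_of_ne_two hp2)
    refine Finset.mem_filter.mpr ⟨Finset.mem_filter.mpr ⟨Finset.mem_univ _, ?_⟩, ?_⟩
    · exact hcu.mul_left (Commute.pow_left rfl 2)
    · rw [hcu2.orderOf_mul_eq_mul_orderOf_of_coprime hcop, hu2, hx2]
  have hIm2sub : Im2 ⊆ C2p := by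
    intro g hg
    obtain ⟨v, hv, rfl⟩ := Finset.mem_image.mp hg
    obtain ⟨hv1, hv2⟩ := Finset.mem_filter.mp hv
    have hcv : Commute v x := (Finset.mem_filter.mp hv1).2
    have hcv2 : Commute v (x ^ p) := hcv.pow_right p
    have hcop : (orderOf v).Coprime (orderOf (x ^ p)) := by
      rw [hv2, hxp]; exact Nat.coprime_two_right.mpr (hp.odd_of_ne_two hp2)
    refine Finset.mem_filter.mpr ⟨Finset.mem_filter.mpr ⟨Finset.mem_univ _, ?_⟩, ?_⟩
    · exact hcv.mul_left (Commute.pow_left rfl p)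
    · rw [hcv2.orderOf_mul_eq_mul_orderOf_of_coprime hcop, hv2, hxp, mul_comm]
  have hinj1 : Im1.card = C2.card :=
    Finset.card_image_of_injective _ (mul_left_injective (x ^ 2))
  have hinj2 : Im2.card = Cp.card :=
    Finset.card_image_of_injective _ (mul_left_injective (x ^ p))
  -- intersection has at most one element
  have hinter : Im1 ∩ Im2 ⊆ {x ^ (p * p) * x ^ 2} := by
    intro g hg
    obtain ⟨hg1, hg2⟩ := Finset.mem_inter.mp hg
    obtain ⟨u, hu, hgu⟩ := Finset.mem_image.mp hg1
    obtain ⟨v, hv, hgv⟩ := Finset.mem_image.mp hg2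
    obtain ⟨hu1, hu2⟩ := Finset.mem_filter.mp hu
    obtain ⟨hv1, hv2⟩ := Finset.mem_filter.mp hv
    have hcu : Commute u (x ^ 2) := ((Finset.mem_filter.mp hu1).2).pow_right 2
    have hcv : Commute v (x ^ p) := ((Finset.mem_filter.mp hv1).2).pow_right p
    have hgp1 : g ^ p = u := by
      rw [← hgu, hcu.mul_pow, ← pow_mul]
      have hx2p : x ^ (2 * p) = 1 := by rw [← hx]; exact pow_orderOf_eq_one x
      have hup : u ^ p = u := by
        conv_lhs => rw [← pow_mod_orderOf, hu2, Nat.odd_iff.mp hodd, pow_one]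
      rw [hx2p, hup, mul_one]
    have hgp2 : g ^ p = x ^ (p * p) := by
      rw [← hgv, hcv.mul_pow, ← pow_mul]
      have hvp : v ^ p = 1 := by rw [← hv2]; exact pow_orderOf_eq_one v
      rw [hvp, one_mul]
    rw [Finset.mem_singleton, ← hgu, ← hgp1, hgp2]
  -- counting
  have hcount : C2.card + Cp.card ≤ C2p.card + 1 := by
    have h1 : (Im1 ∪ Im2).card + (Im1 ∩ Im2).card = Im1.card + Im2.card :=
      Finset.card_union_add_card_inter _ _
    have h2 : (Im1 ∪ Im2).card ≤ C2p.card :=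
      Finset.card_le_card (Finset.union_subset hIm1sub hIm2sub)
    have h3 : (Im1 ∩ Im2).card ≤ 1 := le_trans (Finset.card_le_card hinter) (by simp)
    omega
  have hC1card : C1.card ≤ 1 := by
    refine le_trans (Finset.card_le_card ?_) (Finset.card_singleton (1 : G)).le
    intro g hg
    rw [Finset.mem_singleton, ← orderOf_eq_one_iff]
    exact (Finset.mem_filter.mp hg).2
  have hC2pk : C2p.card ≤ k := by
    rw [hk']
    exact Finset.card_le_card (fun g hg => Finset.mem_filter.mpr
      ⟨Finset.mem_univ _, (Finset.mem_filter.mp hg).2⟩)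
  have hCfcard : Cf.card ≤ 2 * k + 2 := by
    have := Finset.card_le_card hsub
    have h4 : (C1 ∪ C2 ∪ Cp ∪ C2p).card ≤ C1.card + C2.card + Cp.card + C2p.card :=
      le_trans (Finset.card_union_le _ _) (by
        have := le_trans (Finset.card_union_le (C1 ∪ C2) Cp)
          (add_le_add_left (Finset.card_union_le C1 C2) _)
        omega)
    omega
  -- orbit-stabilizer
  haveI : Fintype (orbit (ConjAct G) x) := Fintype.ofFinite _
  haveI : Fintype (stabilizer (ConjAct G) x) := Fintype.ofFinite _
  have hos := card_orbit_mul_card_stabilizer_eq_card_group (ConjAct G) x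
  have hstabcard : Fintype.card (stabilizer (ConjAct G) x) = Cf.card := by
    rw [← Fintype.card_coe Cf]
    apply Fintype.card_congr
    refine Equiv.subtypeEquiv ConjAct.ofConjAct.toEquiv (fun c => ?_)
    rw [mem_stabilizer_iff, ConjAct.smul_def, hCf, Finset.mem_filter]
    constructor
    · intro h
      exact ⟨Finset.mem_univ _, mul_inv_eq_iff_eq_mul.mp h⟩
    · intro h
      rw [mul_inv_eq_iff_eq_mul]
      exact h.2.eq
  have horb : ∀ y : G, y ∈ orbit (ConjAct G) x → orderOf y = 2 * p := by
    intro y hy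
    obtain ⟨c, hc⟩ := hy
    have h := (MulAut.conj (ConjAct.ofConjAct c)).orderOf_eq x
    rw [MulAut.conj_apply] at h
    have hy2 : y = ConjAct.ofConjAct c * x * (ConjAct.ofConjAct c)⁻¹ := by
      rw [← hc]; simp only [ConjAct.smul_def]
    rw [hy2, h, hx]
  have horbcard : Fintype.card (orbit (ConjAct G) x) ≤ k := by
    rw [hk, Nat.card_eq_fintype_card]
    refine Fintype.card_le_of_injective (fun y => ⟨y.1, horb y.1 y.2⟩) ?_
    intro a b hab
    rw [Subtype.ext_iff] at hab ⊢
    simpa using hab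
  calc Fintype.card G
      = Fintype.card (orbit (ConjAct G) x) * Fintype.card (stabilizer (ConjAct G) x) := by
        rw [hos, ConjAct.card]
    _ ≤ k * (2 * k + 2) := Nat.mul_le_mul horbcard (hstabcard ▸ hCfcard)
    _ = 2 * k * (k + 1) := by ring
end

section
/- Let G be a finite group whose maximal element order m equals 2p for an odd prime p, let x ∈ G have order 2p and X = ⟨x⟩. Then for every y ∈ C_G(X) \ X, the coset yX contains at least p elements of order 2p. -/
theorem coset_p_elements_of_order_two_p (G : Type*) [Group G] [Fintype G]
    (p : ℕ) (hp : p.Prime) (hodd : Odd p)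
    (m : ℕ) (hm2p : m = 2 * p)
    (hm : ∀ g : G, orderOf g ≤ m)
    (x : G) (hx : orderOf x = m)
    (y : G) (hy : y ∈ Subgroup.centralizer ((Subgroup.zpowers x : Subgroup G) : Set G))
    (hyX : y ∉ Subgroup.zpowers x) :
    p ≤ Nat.card {g : G // y⁻¹ * g ∈ Subgroup.zpowers x ∧ orderOf g = m} := by
  classical
  have hp2 : 2 ≤ p := hp.two_le
  have hm0 : 0 < m := by omega
  -- x and y commute
  have hxy : Commute x y :=
    Subgroup.mem_centralizer_iff.mp hy x (Subgroup.mem_zpowers x)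
  -- every coset element's order divides m
  have hdvd : ∀ i : ℕ, orderOf (y * x ^ i) ∣ m := by
    intro i
    have hc : Commute x (y * x ^ i) := (hxy.mul_right (Commute.pow_right (Commute.refl x) i))
    obtain ⟨z, _, hz⟩ := hc.exists_orderOf_eq_lcm
    have h1 : m ∣ orderOf z := by
      rw [hz, ← hx]; exact Nat.dvd_lcm_left _ _
    have h2 : orderOf z ≤ m := hm z
    have h3 : orderOf z = m := le_antisymm h2 (Nat.le_of_dvd (orderOf_pos z) h1)
    have : orderOf (y * x ^ i) ∣ orderOf z := by
      rw [hz]; exact Nat.dvd_lcm_right _ _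
    rwa [h3] at this
  -- if order ≠ m then g^2 = 1 or g^p = 1
  have hcase : ∀ i : ℕ, orderOf (y * x ^ i) ≠ m →
      (y * x ^ i) ^ 2 = 1 ∨ (y * x ^ i) ^ p = 1 := by
    intro i hne
    set g := y * x ^ i with hg
    have hd : orderOf g ∣ 2 * p := hm2p ▸ hdvd i
    by_cases hpd : p ∣ orderOf g
    · -- p ∣ d, d ∣ 2p, d ≠ 2p ⇒ d = p
      obtain ⟨k, hk⟩ := hpd
      have hk2 : k ∣ 2 := by
        have : p * k ∣ p * 2 := by rw [← hk]; rwa [mul_comm p 2]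
        exact (mul_dvd_mul_iff_left (by omega : p ≠ 0)).mp this
      have hkle : k ≤ 2 := Nat.le_of_dvd (by norm_num) hk2
      interval_cases k
      · omega
      · right
        exact orderOf_dvd_iff_pow_eq_one.mp (by rw [hk]; simp)
      · exfalso; apply hne; rw [hm2p]; omega
    · -- coprime to p, so d ∣ 2
      left
      have hcop : (orderOf g).Coprime p := ((hp.coprime_iff_not_dvd).mpr hpd).symm
      have h2 : orderOf g ∣ 2 := hcop.dvd_of_dvd_mul_right hd
      exact orderOf_dvd_iff_pow_eq_one.mp h2
  -- pow formula
  have hpow : ∀ i n : ℕ, (y * x ^ i) ^ n = y ^ n * x ^ (i * n) := by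
    intro i n
    have hc : Commute y (x ^ i) := (hxy.pow_left i).symm
    rw [hc.mul_pow, ← pow_mul]
  -- consequences of bad elements
  have hsq : ∀ i : ℕ, (y * x ^ i) ^ 2 = 1 → y ^ 2 ∈ Subgroup.zpowers x := by
    intro i h
    rw [hpow] at h
    have : y ^ 2 = (x ^ (i * 2))⁻¹ := eq_inv_of_mul_eq_one_left h
    rw [this]
    exact Subgroup.inv_mem _ (Subgroup.mem_zpowers_iff.mpr ⟨i * 2, by norm_cast⟩)
  have hpp : ∀ i : ℕ, (y * x ^ i) ^ p = 1 → y ^ p ∈ Subgroup.zpowers x := by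
    intro i h
    rw [hpow] at h
    have : y ^ p = (x ^ (i * p))⁻¹ := eq_inv_of_mul_eq_one_left h
    rw [this]
    exact Subgroup.inv_mem _ (Subgroup.mem_zpowers_iff.mpr ⟨i * p, by norm_cast⟩)
  -- not both y^2 and y^p in X
  have hnotboth : ¬ (y ^ 2 ∈ Subgroup.zpowers x ∧ y ^ p ∈ Subgroup.zpowers x) := by
    rintro ⟨h2, hpin⟩
    apply hyX
    have hcop : IsCoprime (2 : ℤ) (p : ℤ) := by
      rw [Int.isCoprime_iff_gcd_eq_one]
      have : Nat.Coprime 2 p := Nat.coprime_two_left.mpr hodd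
      simpa [Int.gcd] using this
    obtain ⟨a, b, hab⟩ := hcop
    have h2' : y ^ ((2 : ℤ)) ∈ Subgroup.zpowers x := by
      rw [show ((2 : ℤ)) = ((2 : ℕ) : ℤ) by norm_num, zpow_natCast]; exact h2
    have hp' : y ^ ((p : ℤ)) ∈ Subgroup.zpowers x := by
      rw [zpow_natCast]; exact hpin
    have hy1 : y = y ^ ((2 : ℤ) * a + (p : ℤ) * b) := by
      rw [show (2 : ℤ) * a + (p : ℤ) * b = 1 by linarith, zpow_one]
    rw [hy1, zpow_add, zpow_mul, zpow_mul]
    exact Subgroup.mul_mem _ (Subgroup.zpow_mem _ h2' a) (Subgroup.zpow_mem _ hp' b)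
  -- congruence lemmas
  have hmod2 : ∀ i j : ℕ, (y * x ^ i) ^ p = 1 → (y * x ^ j) ^ p = 1 → i % 2 = j % 2 := by
    intro i j hi hj
    rw [hpow] at hi hj
    have hx' : x ^ (i * p) = x ^ (j * p) := by
      have := hi.trans hj.symm
      exact mul_left_cancel this
    have hmodeq : i * p ≡ j * p [MOD m] := by
      rw [← hx]; exact pow_eq_pow_iff_modEq.mp hx'
    have := Nat.ModEq.cancel_right_div_gcd hm0 hmodeq
    have hg : Nat.gcd m p = p := by
      rw [hm2p]; exact Nat.gcd_eq_right ⟨2, (mul_comm 2 p)⟩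
    rw [hg, hm2p] at this
    have h2 : 2 * p / p = 2 := Nat.mul_div_cancel 2 (by omega)
    rw [h2] at this
    exact this
  have hmodp : ∀ i j : ℕ, (y * x ^ i) ^ 2 = 1 → (y * x ^ j) ^ 2 = 1 → i % p = j % p := by
    intro i j hi hj
    rw [hpow] at hi hj
    have hx' : x ^ (i * 2) = x ^ (j * 2) := mul_left_cancel (hi.trans hj.symm)
    have hmodeq : i * 2 ≡ j * 2 [MOD m] := by rw [← hx]; exact pow_eq_pow_iff_modEq.mp hx'
    have := Nat.ModEq.cancel_right_div_gcd hm0 hmodeq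
    have hg : Nat.gcd m 2 = 2 := by
      rw [hm2p]; exact Nat.gcd_eq_right ⟨p, rfl⟩
    rw [hg, hm2p] at this
    have h2 : 2 * p / 2 = p := by omega
    rw [h2] at this
    exact this
  -- the bad and good sets
  set Bad : Finset ℕ := (Finset.range m).filter (fun i => orderOf (y * x ^ i) ≠ m) with hBad
  set Good : Finset ℕ := (Finset.range m).filter (fun i => orderOf (y * x ^ i) = m) with hGood
  have hcards : Good.card + Bad.card = m := by
    rw [hGood, hBad]
    rw [Finset.card_filter_add_card_filter_not (fun i => orderOf (y * x ^ i) = m)]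
    exact Finset.card_range m
  -- bound on Bad
  have hBadcard : Bad.card ≤ p := by
    by_cases hyp2 : y ^ 2 ∈ Subgroup.zpowers x
    · -- then y^p ∉ X, so all bad i satisfy (y x^i)^2 = 1, all ≡ mod p, ≤ 2 elements
      have hypp : y ^ p ∉ Subgroup.zpowers x := fun h => hnotboth ⟨hyp2, h⟩
      have hball : ∀ i ∈ Bad, (y * x ^ i) ^ 2 = 1 := by
        intro i hi
        rw [hBad, Finset.mem_filter] at hi
        rcases hcase i hi.2 with h | h
        · exact h
        · exact absurd (hpp i h) hypp
      rcases Finset.eq_empty_or_nonempty Bad with he | ⟨i0, hi0⟩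
      · rw [he]; simp
      · calc Bad.card ≤ (Finset.range 2).card := by
              apply Finset.card_le_card_of_injOn (fun i => i / p)
              · intro i hi
                rw [Finset.mem_coe, Finset.mem_range]
                have hir : i < m := Finset.mem_range.mp (Finset.mem_filter.mp hi).1
                have : i < 2 * p := hm2p ▸ hir
                exact Nat.div_lt_of_lt_mul (by rwa [mul_comm])
              · intro i hi j hj hij
                have h1 := hmodp i j (hball i hi) (hball j hj)
                have e1 := Nat.div_add_mod i p
                have e2 := Nat.div_add_mod j p
                simp only at hij
                rw [hij, h1] at e1
                omega
            _ = 2 := Finset.card_range 2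
            _ ≤ p := hp2
    · -- y^2 ∉ X, so all bad i satisfy (y x^i)^p = 1, all ≡ mod 2, ≤ p elements
      have hball : ∀ i ∈ Bad, (y * x ^ i) ^ p = 1 := by
        intro i hi
        rw [hBad, Finset.mem_filter] at hi
        rcases hcase i hi.2 with h | h
        · exact absurd (hsq i h) hyp2
        · exact h
      calc Bad.card ≤ (Finset.range p).card := by
            apply Finset.card_le_card_of_injOn (fun i => i / 2)
            · intro i hi
              rw [Finset.mem_coe, Finset.mem_range]
              have hir : i < m := Finset.mem_range.mp (Finset.mem_filter.mp hi).1
              have : i < 2 * p := hm2p ▸ hir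
              exact Nat.div_lt_of_lt_mul this
            · intro i hi j hj hij
              have h1 := hmod2 i j (hball i hi) (hball j hj)
              have := Nat.div_add_mod i 2
              have := Nat.div_add_mod j 2
              simp only at hij
              omega
          _ = p := Finset.card_range p
  have hGoodcard : p ≤ Good.card := by omega
  -- inject Good into the subtype
  have hinj : Function.Injective (fun i : Good =>
      (⟨y * x ^ (i : ℕ), by
        constructor
        · rw [← mul_assoc, inv_mul_cancel, one_mul]
          exact Subgroup.mem_zpowers_iff.mpr ⟨(i : ℕ), by norm_cast⟩
        · exact (Finset.mem_filter.mp i.2).2⟩ :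
        {g : G // y⁻¹ * g ∈ Subgroup.zpowers x ∧ orderOf g = m})) := by
    intro i j hij
    simp only [Subtype.mk_eq_mk] at hij
    have hx' : x ^ (i : ℕ) = x ^ (j : ℕ) := mul_left_cancel hij
    have hmeq : (i : ℕ) ≡ (j : ℕ) [MOD m] := by rw [← hx]; exact pow_eq_pow_iff_modEq.mp hx'
    have hi : (i : ℕ) < m := Finset.mem_range.mp (Finset.mem_filter.mp i.2).1
    have hj : (j : ℕ) < m := Finset.mem_range.mp (Finset.mem_filter.mp j.2).1
    have : (i : ℕ) = (j : ℕ) := by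
      have := Nat.ModEq.eq_of_lt_of_lt hmeq hi hj
      exact this
    exact Subtype.ext (by exact_mod_cast this)
  calc p ≤ Good.card := hGoodcard
    _ = Nat.card Good := by rw [Nat.card_eq_finsetCard]
    _ ≤ Nat.card {g : G // y⁻¹ * g ∈ Subgroup.zpowers x ∧ orderOf g = m} :=
        Nat.card_le_card_of_injective _ hinj
end
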